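/- arXiv:1309.0450 — 2 statements merged into one kernel-verified Lean document; each statement's English description precedes it below -/
import Mathlib

section
/- Let K be a field with a nonarchimedean absolute value |·|, S any type, and ρ : S → ℝ̄. Then the Gauss seminorm δ(ρ) is a multiplicative nonarchimedean seminorm on the polynomial ring K[x_s : s ∈ S] extending |·|: δ(ρ)(c·1) = |c| for every c ∈ K, δ(ρ)(f+g) ≤ max(δ(ρ)(f), δ(ρ)(g)), and δ(ρ)(f·g) = δ(ρ)(f)·δ(ρ)(g) for all polynomials f, g. In particular, for ρ ∈ ℝ̄^n the skeleton map ρ ↦ δ(ρ) takes values in the analytification of affine n-space. -/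
/- ℝ̄ = ℝ ∪ {−∞} -/
abbrev Rbar := WithBot ℝ

/-- exp on ℝ̄, with exp(−∞) := 0. -/
noncomputable def expBar : Rbar → ℝ := WithBot.recBotCoe 0 Real.exp

/-- `abv` is a nonarchimedean absolute value on the field `K`. -/
def IsNonarchAbs {K : Type*} [Field K] (abv : K → ℝ) : Prop :=
  (∀ a, 0 ≤ abv a) ∧ (∀ a, abv a = 0 ↔ a = 0) ∧
    (∀ a b, abv (a * b) = abv a * abv b) ∧ (∀ a b, abv (a + b) ≤ max (abv a) (abv b))

/-- `γ` is a multiplicative nonarchimedean seminorm on the commutative `K`-algebra `A`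
extending the absolute value `abv` on `K`. -/
def IsMultSeminorm {K A : Type*} [Field K] [CommRing A] [Algebra K A]
    (abv : K → ℝ) (γ : A → ℝ) : Prop :=
  (∀ f, 0 ≤ γ f) ∧ γ 0 = 0 ∧ γ 1 = 1 ∧
    (∀ f g, γ (f * g) = γ f * γ g) ∧
    (∀ f g, γ (f + g) ≤ max (γ f) (γ g)) ∧
    (∀ c : K, γ (algebraMap K A c) = abv c)

/-- The Gauss seminorm on `K[x_s : s ∈ S]` with weights `ρ : S → ℝ̄`:
`δ(ρ)(f) = max_{α ∈ supp f} |c_α(f)| ∏_s exp(ρ_s)^{α_s}` (maximum over the empty set is `0`). -/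
noncomputable def gaussSeminorm {K : Type*} [Field K] {S : Type*} (abv : K → ℝ) (ρ : S → Rbar)
    (f : MvPolynomial S K) : ℝ :=
  WithBot.unbotD 0 ((f.support.image fun α =>
      abv (MvPolynomial.coeff α f) * ∏ s ∈ α.support, expBar (ρ s) ^ α s).max)

/-! ### Auxiliary definitions and lemmas -/

open MvPolynomial Finset

/-- The weight of a monomial. -/
noncomputable def gw {S : Type*} (ρ : S → Rbar) (α : S →₀ ℕ) : ℝ :=
  ∏ s ∈ α.support, expBar (ρ s) ^ α s

lemma expBar_nonneg (r : Rbar) : 0 ≤ expBar r := by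
  induction r using WithBot.recBotCoe with
  | bot => simp [expBar]
  | coe x => exact (Real.exp_pos x).le

lemma gw_nonneg {S : Type*} (ρ : S → Rbar) (α : S →₀ ℕ) : 0 ≤ gw ρ α :=
  Finset.prod_nonneg fun s _ => pow_nonneg (expBar_nonneg _) _

lemma gw_zero {S : Type*} (ρ : S → Rbar) : gw ρ 0 = 1 := by simp [gw]

lemma gw_add {S : Type*} (ρ : S → Rbar) (α β : S →₀ ℕ) :
    gw ρ (α + β) = gw ρ α * gw ρ β := by
  classical
  have h : ∀ γ : S →₀ ℕ, gw ρ γ = γ.prod fun s n => expBar (ρ s) ^ n := fun γ => rfl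
  rw [h, h, h]
  exact Finsupp.prod_add_index (by simp) (fun s _ m n => pow_add _ _ _)

section Gauss

variable {K : Type*} [Field K] {S : Type*} (abv : K → ℝ) (ρ : S → Rbar)

lemma gauss_def (f : MvPolynomial S K) :
    gaussSeminorm abv ρ f
      = WithBot.unbotD 0 ((f.support.image fun α => abv (f.coeff α) * gw ρ α).max) := rfl

variable {abv}

lemma abv_zero (habv : IsNonarchAbs abv) : abv 0 = 0 := (habv.2.1 0).mpr rfl

lemma abv_one (habv : IsNonarchAbs abv) : abv 1 = 1 := by
  have h : abv 1 * abv 1 = abv 1 := by rw [← habv.2.2.1, one_mul]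
  have h1 : abv 1 ≠ 0 := fun h0 => one_ne_zero ((habv.2.1 1).mp h0)
  field_simp at h
  tauto

lemma abv_neg (habv : IsNonarchAbs abv) (a : K) : abv (-a) = abv a := by
  have h : abv (-1 : K) = 1 := by
    have h2 : abv (-1 : K) * abv (-1 : K) = 1 := by
      rw [← habv.2.2.1, neg_one_mul, neg_neg, abv_one habv]
    rcases mul_self_eq_one_iff.mp h2 with h | h
    · exact h
    · nlinarith [habv.1 (-1 : K)]
  calc abv (-a) = abv ((-1) * a) := by rw [neg_one_mul]
  _ = abv (-1) * abv a := habv.2.2.1 _ _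
  _ = abv a := by rw [h, one_mul]

lemma abv_sum_le (habv : IsNonarchAbs abv) {ι : Type*} {s : Finset ι} {h : ι → K} {B : ℝ}
    (hB : 0 ≤ B) (hle : ∀ i ∈ s, abv (h i) ≤ B) : abv (∑ i ∈ s, h i) ≤ B := by
  induction s using Finset.cons_induction with
  | empty => simpa [abv_zero habv] using hB
  | cons a s ha ih =>
    rw [Finset.sum_cons]
    refine (habv.2.2.2 _ _).trans (max_le (hle a (Finset.mem_cons_self a s)) ?_)
    exact ih fun i hi => hle i (Finset.mem_cons_of_mem hi)

lemma abv_sum_lt (habv : IsNonarchAbs abv) {ι : Type*} {s : Finset ι} {h : ι → K} {B : ℝ}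
    (hB : 0 < B) (hle : ∀ i ∈ s, abv (h i) < B) : abv (∑ i ∈ s, h i) < B := by
  induction s using Finset.cons_induction with
  | empty => simpa [abv_zero habv] using hB
  | cons a s ha ih =>
    rw [Finset.sum_cons]
    refine lt_of_le_of_lt (habv.2.2.2 _ _) (max_lt (hle a (Finset.mem_cons_self a s)) ?_)
    exact ih fun i hi => hle i (Finset.mem_cons_of_mem hi)

lemma abv_add_eq (habv : IsNonarchAbs abv) {a b : K} (hb : abv b < abv a) :
    abv (a + b) = abv a := by
  refine le_antisymm ((habv.2.2.2 a b).trans (max_le le_rfl hb.le)) ?_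
  by_contra hcon
  push_neg at hcon
  have : abv a = abv ((a + b) + (-b)) := by ring_nf
  have h2 : abv ((a + b) + (-b)) ≤ max (abv (a + b)) (abv (-b)) := habv.2.2.2 _ _
  rw [abv_neg habv] at h2
  have := this.trans_le h2
  rcases max_cases (abv (a + b)) (abv b) with ⟨he, _⟩ | ⟨he, _⟩ <;> rw [he] at this <;> linarith

lemma gauss_nonneg (habv : IsNonarchAbs abv) (f : MvPolynomial S K) :
    0 ≤ gaussSeminorm abv ρ f := by
  rw [gauss_def]
  rcases hmax : (f.support.image fun α => abv (f.coeff α) * gw ρ α).max with _ | a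
  · exact le_rfl
  · have ha := Finset.mem_of_max hmax
    simp only [Finset.mem_image] at ha
    obtain ⟨α, _, hα⟩ := ha
    show (0:ℝ) ≤ a
    rw [← hα]
    exact mul_nonneg (habv.1 _) (gw_nonneg ρ α)

lemma term_le_gauss (habv : IsNonarchAbs abv) (f : MvPolynomial S K) (α : S →₀ ℕ) :
    abv (f.coeff α) * gw ρ α ≤ gaussSeminorm abv ρ f := by
  by_cases hα : α ∈ f.support
  · have hmem : abv (f.coeff α) * gw ρ α
        ∈ f.support.image fun α => abv (f.coeff α) * gw ρ α :=
      Finset.mem_image_of_mem _ hα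
    have hne : (f.support.image fun α => abv (f.coeff α) * gw ρ α).Nonempty := ⟨_, hmem⟩
    rw [gauss_def, ← Finset.coe_max' hne, WithBot.unbotD_coe]
    exact Finset.le_max' _ _ hmem
  · rw [MvPolynomial.notMem_support_iff] at hα
    rw [hα, abv_zero habv, zero_mul]
    exact gauss_nonneg ρ habv f

lemma gauss_le {f : MvPolynomial S K} {B : ℝ} (hB : 0 ≤ B)
    (h : ∀ α ∈ f.support, abv (f.coeff α) * gw ρ α ≤ B) : gaussSeminorm abv ρ f ≤ B := by
  rw [gauss_def]
  rcases hmax : (f.support.image fun α => abv (f.coeff α) * gw ρ α).max with _ | a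
  · exact hB
  · have ha := Finset.mem_of_max hmax
    simp only [Finset.mem_image] at ha
    obtain ⟨α, hαs, hα⟩ := ha
    show a ≤ B
    rw [← hα]
    exact h α hαs

lemma exists_gauss_eq (f : MvPolynomial S K) (hf : f ≠ 0) :
    ∃ α ∈ f.support, gaussSeminorm abv ρ f = abv (f.coeff α) * gw ρ α := by
  have hne : (f.support.image fun α => abv (f.coeff α) * gw ρ α).Nonempty := by
    apply Finset.image_nonempty.mpr
    exact MvPolynomial.support_nonempty.mpr hf
  have hmem := Finset.max'_mem _ hne
  simp only [Finset.mem_image] at hmem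
  obtain ⟨α, hαs, hα⟩ := hmem
  exact ⟨α, hαs, by rw [gauss_def, ← Finset.coe_max' hne, WithBot.unbotD_coe, hα]⟩

lemma gauss_zero : gaussSeminorm abv ρ (0 : MvPolynomial S K) = 0 := by
  simp [gaussSeminorm]

lemma gauss_C (habv : IsNonarchAbs abv) (c : K) :
    gaussSeminorm abv ρ (MvPolynomial.C c : MvPolynomial S K) = abv c := by
  classical
  by_cases hc : c = 0
  · subst hc; rw [map_zero, gauss_zero, abv_zero habv]
  · rw [gauss_def]
    rw [show (MvPolynomial.C c : MvPolynomial S K).support = {0} by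
      classical
      rw [show (MvPolynomial.C c : MvPolynomial S K) = MvPolynomial.monomial 0 c from rfl,
        MvPolynomial.support_monomial]
      simp [hc]]
    simp [gw_zero]

lemma gauss_mul_le (habv : IsNonarchAbs abv) (f g : MvPolynomial S K) :
    gaussSeminorm abv ρ (f * g) ≤ gaussSeminorm abv ρ f * gaussSeminorm abv ρ g := by
  classical
  have h0f := gauss_nonneg ρ habv f
  have h0g := gauss_nonneg ρ habv g
  refine gauss_le ρ (mul_nonneg h0f h0g) fun α _ => ?_
  rcases eq_or_lt_of_le (gw_nonneg ρ α) with hw | hw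
  · rw [← hw, mul_zero]; exact mul_nonneg h0f h0g
  · rw [MvPolynomial.coeff_mul]
    rw [← div_mul_cancel₀ (gaussSeminorm abv ρ f * gaussSeminorm abv ρ g) hw.ne']
    refine mul_le_mul_of_nonneg_right ?_ hw.le
    refine abv_sum_le habv (div_nonneg (mul_nonneg h0f h0g) hw.le) fun p hp => ?_
    rw [le_div_iff₀ hw, habv.2.2.1]
    have hpsum : p.1 + p.2 = α := Finset.HasAntidiagonal.mem_antidiagonal.mp hp
    rw [← hpsum, gw_add]
    calc abv (f.coeff p.1) * abv (g.coeff p.2) * (gw ρ p.1 * gw ρ p.2)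
        = (abv (f.coeff p.1) * gw ρ p.1) * (abv (g.coeff p.2) * gw ρ p.2) := by ring
      _ ≤ gaussSeminorm abv ρ f * gaussSeminorm abv ρ g :=
        mul_le_mul (term_le_gauss ρ habv f p.1) (term_le_gauss ρ habv g p.2)
          (mul_nonneg (habv.1 _) (gw_nonneg _ _)) h0f

lemma gauss_mul_ge (habv : IsNonarchAbs abv) (f g : MvPolynomial S K)
    (hf : 0 < gaussSeminorm abv ρ f) (hg : 0 < gaussSeminorm abv ρ g) :
    gaussSeminorm abv ρ f * gaussSeminorm abv ρ g ≤ gaussSeminorm abv ρ (f * g) := by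
  classical
  letI : LinearOrder S := IsWellOrder.linearOrder WellOrderingRel
  set γf := gaussSeminorm abv ρ f with hγf
  set γg := gaussSeminorm abv ρ g with hγg
  have hf0 : f ≠ 0 := by rintro rfl; rw [hγf, gauss_zero] at hf; exact lt_irrefl 0 hf
  have hg0 : g ≠ 0 := by rintro rfl; rw [hγg, gauss_zero] at hg; exact lt_irrefl 0 hg
  -- sets of exponents realizing the max
  set Tf := f.support.filter (fun α => abv (f.coeff α) * gw ρ α = γf) with hTf
  set Tg := g.support.filter (fun α => abv (g.coeff α) * gw ρ α = γg) with hTg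
  have hTfne : Tf.Nonempty := by
    obtain ⟨α, hα, he⟩ := exists_gauss_eq ρ f hf0
    exact ⟨α, Finset.mem_filter.mpr ⟨hα, he.symm⟩⟩
  have hTgne : Tg.Nonempty := by
    obtain ⟨α, hα, he⟩ := exists_gauss_eq ρ g hg0
    exact ⟨α, Finset.mem_filter.mpr ⟨hα, he.symm⟩⟩
  obtain ⟨α₀, hα₀, hαmax⟩ := Tf.exists_max_image (fun α => toLex α) hTfne
  obtain ⟨β₀, hβ₀, hβmax⟩ := Tg.exists_max_image (fun α => toLex α) hTgne
  rw [hTf, Finset.mem_filter] at hα₀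
  rw [hTg, Finset.mem_filter] at hβ₀
  have hwα : 0 < gw ρ α₀ := by
    rcases eq_or_lt_of_le (gw_nonneg ρ α₀) with hw | hw
    · exfalso; rw [← hw, mul_zero] at hα₀; exact hf.ne hα₀.2
    · exact hw
  have hwβ : 0 < gw ρ β₀ := by
    rcases eq_or_lt_of_le (gw_nonneg ρ β₀) with hw | hw
    · exfalso; rw [← hw, mul_zero] at hβ₀; exact hg.ne hβ₀.2
    · exact hw
  set W := gw ρ (α₀ + β₀) with hW
  have hWval : W = gw ρ α₀ * gw ρ β₀ := gw_add ρ α₀ β₀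
  have hWpos : 0 < W := by rw [hWval]; exact mul_pos hwα hwβ
  -- the key strict bound for non-leading terms
  have key : ∀ p : (S →₀ ℕ) × (S →₀ ℕ), p.1 + p.2 = α₀ + β₀ → p ≠ (α₀, β₀) →
      (abv (f.coeff p.1) * gw ρ p.1) * (abv (g.coeff p.2) * gw ρ p.2) < γf * γg := by
    intro p hsum hne
    have hLexSum : toLex p.1 + toLex p.2 = toLex α₀ + toLex β₀ := by
      exact congrArg toLex hsum
    have case1 : toLex β₀ < toLex p.2 →
        (abv (f.coeff p.1) * gw ρ p.1) * (abv (g.coeff p.2) * gw ρ p.2) < γf * γg := by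
      intro hlt
      have h2 : abv (g.coeff p.2) * gw ρ p.2 < γg := by
        by_cases hmem : p.2 ∈ g.support
        · refine lt_of_le_of_ne (term_le_gauss ρ habv g p.2) fun heq => ?_
          have : p.2 ∈ Tg := Finset.mem_filter.mpr ⟨hmem, heq⟩
          exact absurd (hβmax p.2 this) (not_le.mpr hlt)
        · rw [MvPolynomial.notMem_support_iff] at hmem
          rw [hmem, abv_zero habv, zero_mul]; exact hg
      calc (abv (f.coeff p.1) * gw ρ p.1) * (abv (g.coeff p.2) * gw ρ p.2)
          ≤ γf * (abv (g.coeff p.2) * gw ρ p.2) :=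
            mul_le_mul_of_nonneg_right (term_le_gauss ρ habv f p.1)
              (mul_nonneg (habv.1 _) (gw_nonneg _ _))
        _ < γf * γg := by exact mul_lt_mul_of_pos_left h2 hf
    have case2 : toLex α₀ < toLex p.1 →
        (abv (f.coeff p.1) * gw ρ p.1) * (abv (g.coeff p.2) * gw ρ p.2) < γf * γg := by
      intro hlt
      have h1 : abv (f.coeff p.1) * gw ρ p.1 < γf := by
        by_cases hmem : p.1 ∈ f.support
        · refine lt_of_le_of_ne (term_le_gauss ρ habv f p.1) fun heq => ?_
          have : p.1 ∈ Tf := Finset.mem_filter.mpr ⟨hmem, heq⟩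
          exact absurd (hαmax p.1 this) (not_le.mpr hlt)
        · rw [MvPolynomial.notMem_support_iff] at hmem
          rw [hmem, abv_zero habv, zero_mul]; exact hf
      calc (abv (f.coeff p.1) * gw ρ p.1) * (abv (g.coeff p.2) * gw ρ p.2)
          ≤ (abv (f.coeff p.1) * gw ρ p.1) * γg :=
            mul_le_mul_of_nonneg_left (term_le_gauss ρ habv g p.2)
              (mul_nonneg (habv.1 _) (gw_nonneg _ _))
        _ < γf * γg := mul_lt_mul_of_pos_right h1 hg
    rcases lt_trichotomy (toLex p.1) (toLex α₀) with hlt | heq | hgt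
    · apply case1
      by_contra hle
      push_neg at hle
      have : toLex p.1 + toLex p.2 < toLex α₀ + toLex β₀ :=
        add_lt_add_of_lt_of_le hlt hle
      exact absurd hLexSum this.ne
    · have h1 : p.1 = α₀ := toLex.injective heq
      have h2 : p.2 = β₀ := by
        have := hsum
        rw [h1] at this
        exact add_left_cancel this
      exact absurd (Prod.ext h1 h2) hne
    · exact case2 hgt
  -- the leading coefficient of f * g
  have hcoeff : abv ((f * g).coeff (α₀ + β₀)) = γf * γg / W := by
    rw [MvPolynomial.coeff_mul]
    have hmem : ((α₀, β₀) : (S →₀ ℕ) × (S →₀ ℕ)) ∈ Finset.HasAntidiagonal.antidiagonal (α₀ + β₀) :=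
      Finset.HasAntidiagonal.mem_antidiagonal.mpr rfl
    rw [← Finset.add_sum_erase _ _ hmem]
    have hmain : abv (f.coeff α₀ * g.coeff β₀) = γf * γg / W := by
      rw [habv.2.2.1, eq_div_iff hWpos.ne', hWval]
      calc abv (f.coeff α₀) * abv (g.coeff β₀) * (gw ρ α₀ * gw ρ β₀)
          = (abv (f.coeff α₀) * gw ρ α₀) * (abv (g.coeff β₀) * gw ρ β₀) := by ring
        _ = γf * γg := by rw [hα₀.2, hβ₀.2]
    have hrest : abv (∑ p ∈ (Finset.HasAntidiagonal.antidiagonal (α₀ + β₀)).erase (α₀, β₀),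
        f.coeff p.1 * g.coeff p.2) < γf * γg / W := by
      refine abv_sum_lt habv (div_pos (mul_pos hf hg) hWpos) fun p hp => ?_
      have hp' := Finset.mem_of_mem_erase hp
      have hpne := Finset.ne_of_mem_erase hp
      have hpsum : p.1 + p.2 = α₀ + β₀ := Finset.HasAntidiagonal.mem_antidiagonal.mp hp'
      rw [habv.2.2.1, lt_div_iff₀ hWpos, hW, ← hpsum, gw_add]
      calc abv (f.coeff p.1) * abv (g.coeff p.2) * (gw ρ p.1 * gw ρ p.2)
          = (abv (f.coeff p.1) * gw ρ p.1) * (abv (g.coeff p.2) * gw ρ p.2) := by ring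
        _ < γf * γg := key p hpsum hpne
    rw [abv_add_eq habv (by rw [hmain]; exact hrest), hmain]
  -- conclude
  have := term_le_gauss ρ habv (f * g) (α₀ + β₀)
  rw [hcoeff, ← hW, div_mul_cancel₀ _ hWpos.ne'] at this
  exact this

lemma gauss_add_le (habv : IsNonarchAbs abv) (f g : MvPolynomial S K) :
    gaussSeminorm abv ρ (f + g)
      ≤ max (gaussSeminorm abv ρ f) (gaussSeminorm abv ρ g) := by
  refine gauss_le ρ (le_trans (gauss_nonneg ρ habv f) (le_max_left _ _)) fun α _ => ?_
  rw [MvPolynomial.coeff_add]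
  calc abv (f.coeff α + g.coeff α) * gw ρ α
      ≤ max (abv (f.coeff α)) (abv (g.coeff α)) * gw ρ α :=
        mul_le_mul_of_nonneg_right (habv.2.2.2 _ _) (gw_nonneg _ _)
    _ = max (abv (f.coeff α) * gw ρ α) (abv (g.coeff α) * gw ρ α) :=
        max_mul_of_nonneg _ _ (gw_nonneg _ _)
    _ ≤ max (gaussSeminorm abv ρ f) (gaussSeminorm abv ρ g) :=
        max_le_max (term_le_gauss ρ habv f α) (term_le_gauss ρ habv g α)

end Gauss

/-- the Gauss seminorm is a multiplicative nonarchimedean seminorm on the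
polynomial ring extending the absolute value of `K`. -/
theorem gaussSeminorm_isMultSeminorm {K : Type*} [Field K] (abv : K → ℝ)
    (habv : IsNonarchAbs abv) {S : Type*} (ρ : S → Rbar) :
    IsMultSeminorm abv (gaussSeminorm abv ρ) := by
  refine ⟨gauss_nonneg ρ habv, gauss_zero ρ, ?_, ?_, gauss_add_le ρ habv, ?_⟩
  · have := gauss_C (S := S) ρ habv 1
    rwa [map_one, abv_one habv] at this
  · intro f g
    refine le_antisymm (gauss_mul_le ρ habv f g) ?_
    rcases eq_or_lt_of_le (gauss_nonneg ρ habv f) with hf | hf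
    · rw [← hf, zero_mul]; exact gauss_nonneg ρ habv (f * g)
    rcases eq_or_lt_of_le (gauss_nonneg ρ habv g) with hg | hg
    · rw [← hg, mul_zero]; exact gauss_nonneg ρ habv (f * g)
    exact gauss_mul_ge ρ habv f g hf hg
  · intro c
    have : algebraMap K (MvPolynomial S K) c = MvPolynomial.C c := rfl
    rw [this]
    exact gauss_C ρ habv c
end

section
/- Let K be a field with a nonarchimedean absolute value |·|, S any type, and let γ be a multiplicative nonarchimedean seminorm on the polynomial ring K[x_s : s ∈ S] extending |·|. Define ρ : S → ℝ̄ by ρ_s := log γ(x_s), with log 0 := −∞. Then γ(f) ≤ δ(ρ)(f) for every polynomial f; i.e. the Gauss seminorm is the greatest multiplicative nonarchimedean seminorm extending |·| with the prescribed values on the variables. -/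
/-- `log : ℝ≥0 → ℝ̄` with `log 0 := −∞`. -/
noncomputable def elog (t : ℝ) : Rbar := if t = 0 then (⊥ : Rbar) else ((Real.log t : ℝ) : Rbar)

lemma expBar_elog (t : ℝ) (ht : 0 ≤ t) : expBar (elog t) = t := by
  unfold elog expBar
  split_ifs with h
  · simp [h, WithBot.recBotCoe]
  · simpa [WithBot.recBotCoe] using Real.exp_log (lt_of_le_of_ne ht (Ne.symm h))

lemma gamma_sum_le {A : Type*} [CommRing A] (γ : A → ℝ) (h0 : γ 0 = 0)
    (hadd : ∀ f g, γ (f + g) ≤ max (γ f) (γ g)) {ι : Type*} (s : Finset ι) (g : ι → A)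
    (M : ℝ) (hM : 0 ≤ M) (hg : ∀ i ∈ s, γ (g i) ≤ M) : γ (∑ i ∈ s, g i) ≤ M := by
  induction s using Finset.cons_induction with
  | empty => simpa [h0]
  | cons a s ha ih =>
    rw [Finset.sum_cons]
    refine le_trans (hadd _ _) (max_le (hg a (by simp)) (ih fun i hi => hg i (by simp [hi])))

lemma gamma_prod {A : Type*} [CommRing A] (γ : A → ℝ) (h1 : γ 1 = 1)
    (hmul : ∀ f g, γ (f * g) = γ f * γ g) {ι : Type*} (s : Finset ι) (g : ι → A) :
    γ (∏ i ∈ s, g i) = ∏ i ∈ s, γ (g i) := by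
  induction s using Finset.cons_induction with
  | empty => simpa
  | cons a s ha ih => rw [Finset.prod_cons, Finset.prod_cons, hmul, ih]

lemma gamma_pow {A : Type*} [CommRing A] (γ : A → ℝ) (h1 : γ 1 = 1)
    (hmul : ∀ f g, γ (f * g) = γ f * γ g) (a : A) (n : ℕ) : γ (a ^ n) = γ a ^ n := by
  induction n with
  | zero => simpa
  | succ n ih => rw [pow_succ, pow_succ, hmul, ih]

/-- any multiplicative nonarchimedean seminorm `γ` on `K[x_s : s ∈ S]`
extending `abv` is dominated by the Gauss seminorm with weights `ρ_s = log γ(x_s)`;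
i.e. the Gauss seminorm is the greatest such seminorm with the prescribed values on the
variables. -/
theorem le_gaussSeminorm {K : Type*} [Field K] (abv : K → ℝ) (habv : IsNonarchAbs abv)
    {S : Type*} (γ : MvPolynomial S K → ℝ) (hγ : IsMultSeminorm abv γ) :
    ∀ f : MvPolynomial S K,
      γ f ≤ gaussSeminorm abv (fun s => elog (γ (MvPolynomial.X s))) f := by
  obtain ⟨hnn, h0, h1, hmul, hadd, hK⟩ := hγ
  intro f
  set T : (S →₀ ℕ) → ℝ := fun α =>
    abv (MvPolynomial.coeff α f) * ∏ s ∈ α.support,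
      expBar (elog (γ (MvPolynomial.X s))) ^ α s with hT
  have key : ∀ α ∈ f.support, γ ((MvPolynomial.monomial α) (MvPolynomial.coeff α f)) = T α := by
    intro α hα
    rw [MvPolynomial.monomial_eq]
    rw [hmul, hT]
    have hC : γ (MvPolynomial.C (MvPolynomial.coeff α f)) = abv (MvPolynomial.coeff α f) := hK _
    rw [hC]
    congr 1
    rw [Finsupp.prod, gamma_prod γ h1 hmul]
    apply Finset.prod_congr rfl
    intro s hs
    rw [gamma_pow γ h1 hmul, expBar_elog _ (hnn _)]
  have Tnn : ∀ α ∈ f.support, 0 ≤ T α := fun α hα => (key α hα) ▸ hnn _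
  have gauss_nonneg : 0 ≤ gaussSeminorm abv (fun s => elog (γ (MvPolynomial.X s))) f := by
    unfold gaussSeminorm
    rcases Finset.eq_empty_or_nonempty f.support with h | h
    · simp [h]
    · have hne : (f.support.image fun α =>
          abv (MvPolynomial.coeff α f) * ∏ s ∈ α.support,
            expBar (elog (γ (MvPolynomial.X s))) ^ α s).Nonempty := h.image _
      obtain ⟨m, hm⟩ := Finset.max_of_nonempty hne
      rw [hm, WithBot.unbotD_coe]
      obtain ⟨α, hα, hval⟩ := Finset.mem_image.mp (Finset.mem_of_max hm)
      rw [← hval]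
      exact Tnn α hα
  have hle : ∀ α ∈ f.support,
      T α ≤ gaussSeminorm abv (fun s => elog (γ (MvPolynomial.X s))) f := by
    intro α hα
    unfold gaussSeminorm
    have hmem : T α ∈ f.support.image fun α =>
        abv (MvPolynomial.coeff α f) * ∏ s ∈ α.support,
          expBar (elog (γ (MvPolynomial.X s))) ^ α s :=
      Finset.mem_image_of_mem _ hα
    have := Finset.le_max hmem
    rcases hmax : (f.support.image fun α =>
        abv (MvPolynomial.coeff α f) * ∏ s ∈ α.support,
          expBar (elog (γ (MvPolynomial.X s))) ^ α s).max with m | m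
    · rw [hmax] at this
      exact absurd (le_bot_iff.mp this) WithBot.coe_ne_bot
    · rw [hmax] at this
      show T α ≤ m
      exact WithBot.coe_le_coe.mp this
  conv_lhs => rw [(MvPolynomial.support_sum_monomial_coeff f).symm]
  refine gamma_sum_le γ h0 hadd _ _ _ gauss_nonneg ?_
  intro α hα
  rw [key α hα]
  exact hle α hα
end
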